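/- Encoding rooted unordered t-labelled trees of height ≤ i+1 as pairs (root label-set, function from limb-isomorphism-classes to multiplicities bounded by f(i)): this encoding is injective on l-isomorphism classes. Formally, if two such trees have equal root label-set and for every l-isomorphism class C of trees of height ≤ i the same number of limbs in class C, then the trees are l-isomorphic. -/

import Mathlib

/-!
Once l-isomorphism is known to be an equivalence relation, equal class multiplicities let the
limbs be paired off greedily: match a limb of the first tree with an l-isomorphic limb of the
second, remove both (which keeps all multiplicities equal), and recurse on the remaining limbs.
-/

/-- A rooted unordered `t`-labelled tree: each node carries a set of labels
from a fixed set of `t` labels, and a list of children (limbs). -/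
inductive LTree (t : ℕ) : Type
  | node (label : Finset (Fin t)) (children : List (LTree t)) : LTree t

namespace LTree

mutual
  /-- Height of a rooted tree (a single node has height 0). -/
  def height {t : ℕ} : LTree t → ℕ
    | .node _ cs => heightList cs
  /-- Auxiliary: `heightList cs` = max over `c ∈ cs` of `height c + 1`. -/
  def heightList {t : ℕ} : List (LTree t) → ℕ
    | [] => 0
    | c :: cs => max (height c + 1) (heightList cs)
end

mutual
  /-- Number of nodes of a rooted tree. -/
  def size {t : ℕ} : LTree t → ℕ
    | .node _ cs => 1 + sizeList cs
  def sizeList {t : ℕ} : List (LTree t) → ℕ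
    | [] => 0
    | c :: cs => size c + sizeList cs
end

/-- l-isomorphism of rooted labelled trees: a root- and label-preserving
isomorphism (children are unordered). -/
inductive LIso {t : ℕ} : LTree t → LTree t → Prop
  | node (a : Finset (Fin t)) (cs ds ds' : List (LTree t)) :
      List.Forall₂ LIso cs ds' → List.Perm ds' ds →
      LIso (.node a cs) (.node a ds)

open scoped Classical in
/-- The number of members of `cs` l-isomorphic to `c`. -/
noncomputable def limbCount {t : ℕ} (c : LTree t) (cs : List (LTree t)) : ℕ :=
  cs.countP fun d => decide (LIso c d)

/-- `ReducedB f i T`: the tree `T`, regarded as a tree of height ≤ i, is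
f-reduced: at every node at level j+1 each l-isomorphism class of its limbs
occurs at most f(j) times. -/
def ReducedB {t : ℕ} (f : ℕ → ℕ) : ℕ → LTree t → Prop
  | 0, _ => True
  | i + 1, .node _ cs =>
      (∀ c ∈ cs, ReducedB f i c) ∧ ∀ c ∈ cs, limbCount c cs ≤ f i

end LTree

namespace List

theorem Forall₂.trans_of_forall_mem {α β γ : Type*} {R : α → β → Prop} {S : β → γ → Prop}
    {T : α → γ → Prop} :
    ∀ {l₁ l₂ l₃}, Forall₂ R l₁ l₂ → Forall₂ S l₂ l₃ →
      (∀ a ∈ l₁, ∀ b c, R a b → S b c → T a c) → Forall₂ T l₁ l₃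
  | _, _, _, .nil, .nil, _ => .nil
  | _, _, _, .cons hab hR, .cons hbc hS, h =>
    .cons (h _ mem_cons_self _ _ hab hbc)
      (hR.trans_of_forall_mem hS fun a ha => h a (mem_cons_of_mem _ ha))

variable {α : Type*} {r : α → α → Prop} [DecidableRel r]

theorem exists_forall₂_perm_of_countP_eq (hr : Equivalence r) :
    ∀ {l₁ l₂ : List α}, (∀ x ∈ l₁ ++ l₂, l₁.countP (r x ·) = l₂.countP (r x ·)) →
      ∃ l, Forall₂ r l₁ l ∧ l ~ l₂
  | [], [], _ => ⟨[], .nil, .nil⟩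
  | [], d :: l₂, h => by
    have := h d (by simp)
    simp [hr.refl d] at this
  | c :: l₁, l₂, h => by
    have hpos : 0 < l₂.countP (r c ·) := by
      rw [← h c (by simp)]
      exact countP_pos_iff.2 ⟨c, mem_cons_self, by simpa using hr.refl c⟩
    obtain ⟨d, hd, hcd⟩ := countP_pos_iff.1 hpos
    have hcd : r c d := by simpa using hcd
    obtain ⟨s, u, rfl⟩ := append_of_mem hd
    obtain ⟨l, hl, hlp⟩ := exists_forall₂_perm_of_countP_eq hr (l₁ := l₁) (l₂ := s ++ u)
      fun x hx => by
        have hcount := (h x (by simp at hx ⊢; tauto)).trans (perm_middle.countP_eq _)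
        have hiff : r x c ↔ r x d := ⟨(hr.trans · hcd), (hr.trans · (hr.symm hcd))⟩
        simp only [countP_cons, hiff] at hcount
        omega
    exact ⟨d :: l, .cons hcd hl, (hlp.cons d).trans perm_middle.symm⟩

end List

namespace LTree

variable {t : ℕ}

theorem induction_mem {P : LTree t → Prop} (ind : ∀ a cs, (∀ c ∈ cs, P c) → P (node a cs)) :
    ∀ T, P T
  | node a cs => ind a cs fun c _ => induction_mem ind c

theorem LIso.refl (T : LTree t) : LIso T T :=
  induction_mem (P := fun T => LIso T T)
    (fun a cs ih => .node a cs cs cs (List.forall₂_same.2 ih) (.refl _)) T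

theorem LIso.symm {T U : LTree t} : LIso T U → LIso U T := by
  induction T using induction_mem generalizing U with
  | ind a cs ih =>
    rintro ⟨_, _, ds, ds', hf, hp⟩
    have hf' : List.Forall₂ (flip LIso) cs ds' :=
      ((List.forall₂_and_left _ _).2 ⟨ih, hf⟩).imp fun _ _ h => h.1 h.2
    obtain ⟨es, hes, hesp⟩ := List.perm_comp_forall₂ hp.symm hf'.flip
    exact .node a ds cs es hes hesp

theorem LIso.trans {T U V : LTree t} : LIso T U → LIso U V → LIso T V := by
  induction T using induction_mem generalizing U V with
  | ind a cs ih =>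
    rintro ⟨_, _, ds, ds', hf, hp⟩ ⟨_, _, es, es', hg, hq⟩
    obtain ⟨m, hm, hmp⟩ := List.perm_comp_forall₂ hp hg
    exact .node a cs es m (hf.trans_of_forall_mem hm fun c hc _ _ => ih c hc) (hmp.trans hq)

theorem LIso.equivalence : Equivalence (@LIso t) := ⟨LIso.refl, LIso.symm, LIso.trans⟩

end LTree

open LTree in
/-- Injectivity of the encoding of trees of height ≤ i+1 by (root label-set,
multiplicity of each l-isomorphism class of limbs of height ≤ i): if two such
trees have the same root label-set and, for every tree C of height ≤ i, the
same number of limbs l-isomorphic to C, then they are l-isomorphic. -/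
theorem stmt9 (t i : ℕ) (a b : Finset (Fin t)) (cs ds : List (LTree t))
    (hcs : ∀ c ∈ cs, height c ≤ i) (hds : ∀ d ∈ ds, height d ≤ i)
    (hlab : a = b)
    (hcount : ∀ C : LTree t, height C ≤ i → limbCount C cs = limbCount C ds) :
    LIso (.node a cs) (.node b ds) := by
  classical
  obtain ⟨ds', hf, hp⟩ := List.exists_forall₂_perm_of_countP_eq LIso.equivalence
    fun C hC => hcount C <| (List.mem_append.1 hC).elim (hcs C) (hds C)
  exact hlab ▸ .node a cs ds ds' hf hp
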